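/- arXiv:1412.2223 — 3 statements merged into one kernel-verified Lean document; each statement's English description precedes it below -/
import Mathlib

section
/- The collection b(τ) = {N_{φ,Q} : φ ∈ F(L,ℝ), Q ∈ U} ∪ P(L × ℝ), where N_{φ,Q} = {(λ, φ(λ)) : λ ∈ Q} ∪ {[φ]_I}, forms a basis for a topology on (L × ℝ) ⊎ K: for any two basic sets A, B and any x ∈ A ∩ B there exists a basic set C with x ∈ C ⊆ A ∩ B. -/
/-! A point of `L × ℝ` is isolated, since `{(λ, r)}` is basic. A point `[φ]_I` of `K` lies only
in sets `N_{φ,Q}`, and `[φ]_I = [ψ]_I` means `φ = ψ` on some `E ∈ U`; so `N_{φ,Q} ∩ N_{ψ,R}`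
contains the basic set `N_{φ, Q ∩ R ∩ E}` around `[φ]_I`. -/

open Filter Set

variable (L : Type) (U : Ultrafilter L)

/-- The underlying set `R_L = (L × ℝ) ⊎ K`, where `K = F(L,ℝ)/I` is realized as the
ultrapower `Filter.Germ ↑U ℝ` (the quotient of `L → ℝ` by equality on a set of `U`). -/
def RL := (L × ℝ) ⊕ Filter.Germ (U : Filter L) ℝ

/-- The basic neighborhood `N_{φ,Q} = {(λ, φ(λ)) : λ ∈ Q} ∪ {[φ]_I}`. -/
def Nset (φ : L → ℝ) (Q : Set L) : Set (RL L U) :=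
  (Sum.inl '' ((fun l => (l, φ l)) '' Q)) ∪ {Sum.inr (φ : Filter.Germ (U : Filter L) ℝ)}

/-- The basis `b(τ) = {N_{φ,Q} : φ ∈ F(L,ℝ), Q ∈ U} ∪ P(L × ℝ)`. -/
def slimBasis : Set (Set (RL L U)) :=
  {S | ∃ φ : L → ℝ, ∃ Q ∈ U, S = Nset L U φ Q} ∪ {S | ∃ A : Set (L × ℝ), S = Sum.inl '' A}

/-- The slim topology `τ_U` generated by this basis. -/
def slimTop : TopologicalSpace (RL L U) := TopologicalSpace.generateFrom (slimBasis L U)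

section

variable {L U}

theorem singleton_inl_mem_slimBasis (p : L × ℝ) :
    ({Sum.inl p} : Set (RL L U)) ∈ slimBasis L U :=
  Or.inr ⟨{p}, (image_singleton).symm⟩

theorem inr_mem_Nset (φ : L → ℝ) (Q : Set L) :
    (Sum.inr (φ : Germ (U : Filter L) ℝ) : RL L U) ∈ Nset L U φ Q :=
  Or.inr rfl

theorem inr_mem_Nset_iff {g : Germ (U : Filter L) ℝ} {φ : L → ℝ} {Q : Set L} :
    (Sum.inr g : RL L U) ∈ Nset L U φ Q ↔ g = φ := by
  constructor
  · rintro (⟨_, _, h⟩ | h)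
    · exact (Sum.inl_ne_inr h).elim
    · exact Sum.inr_injective h
  · rintro rfl
    exact inr_mem_Nset φ Q

theorem Nset_subset_Nset {φ ψ : L → ℝ} {Q R : Set L} (hQR : Q ⊆ R) (hφψ : EqOn φ ψ Q)
    (hgerm : (φ : Germ (U : Filter L) ℝ) = ψ) : Nset L U φ Q ⊆ Nset L U ψ R := by
  rintro _ (⟨_, ⟨l, hl, rfl⟩, rfl⟩ | rfl)
  · exact Or.inl ⟨_, ⟨l, hQR hl, by simp only [hφψ hl]⟩, rfl⟩
  · exact Or.inr (by rw [hgerm]; rfl)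

theorem exists_Nset_of_inr_mem {S : Set (RL L U)} (hS : S ∈ slimBasis L U)
    {g : Germ (U : Filter L) ℝ} (hg : Sum.inr g ∈ S) :
    ∃ φ : L → ℝ, ∃ Q ∈ U, S = Nset L U φ Q ∧ g = φ := by
  rcases hS with ⟨φ, Q, hQ, rfl⟩ | ⟨A, rfl⟩
  · exact ⟨φ, Q, hQ, rfl, inr_mem_Nset_iff.1 hg⟩
  · obtain ⟨_, _, h⟩ := hg
    exact (Sum.inl_ne_inr h).elim

end

theorem stmt2 :
    ∀ A ∈ slimBasis L U, ∀ B ∈ slimBasis L U, ∀ x ∈ A ∩ B,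
      ∃ C ∈ slimBasis L U, x ∈ C ∧ C ⊆ A ∩ B := by
  rintro A hA B hB x hx
  cases x with
  | inl p => exact ⟨{Sum.inl p}, singleton_inl_mem_slimBasis p, rfl, singleton_subset_iff.2 hx⟩
  | inr g =>
    obtain ⟨φ, Q, hQ, rfl, rfl⟩ := exists_Nset_of_inr_mem hA hx.1
    obtain ⟨ψ, R, hR, rfl, hφψ⟩ := exists_Nset_of_inr_mem hB hx.2
    have hE : {l | φ l = ψ l} ∈ U := Germ.coe_eq.1 hφψ
    refine ⟨Nset L U φ (Q ∩ R ∩ {l | φ l = ψ l}),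
      Or.inl ⟨φ, _, inter_mem (inter_mem hQ hR) hE, rfl⟩, inr_mem_Nset φ _, subset_inter ?_ ?_⟩
    · exact Nset_subset_Nset (fun l hl => hl.1.1) (fun _ _ => rfl) rfl
    · exact Nset_subset_Nset (fun l hl => hl.1.2) (fun _ hl => hl.2) hφψ
end

section
/- The topology τ on R_L = (L × ℝ) ⊎ K generated by the basis {N_{φ,Q} : φ ∈ F(L,ℝ), Q ∈ U} ∪ P(L × ℝ) is Hausdorff. -/
/-!
Points of `L × ℝ` are isolated. A point `(λ, r)` is separated from a germ `[φ]` by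
`N_{φ, L ∖ {λ}}`, which is a basic open set because `U` is free. Two distinct germs
`[φ] ≠ [ψ]` disagree on some `Q ∈ U` since `U` is an ultrafilter, and then `N_{φ,Q}` and
`N_{ψ,Q}` are disjoint.
-/

open Filter Set

variable (L : Type) (U : Ultrafilter L)

attribute [local instance] slimTop

open Topology

section

variable {L U}

lemma isOpen_inl_image (A : Set (L × ℝ)) : IsOpen (Sum.inl '' A : Set (RL L U)) :=
  TopologicalSpace.GenerateOpen.basic _ (Or.inr ⟨A, rfl⟩)

lemma isOpen_Nset (φ : L → ℝ) {Q : Set L} (hQ : Q ∈ U) : IsOpen (Nset L U φ Q) :=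
  TopologicalSpace.GenerateOpen.basic _ (Or.inl ⟨φ, Q, hQ, rfl⟩)

lemma mem_Nset {φ : L → ℝ} {Q : Set L} {x : RL L U} :
    x ∈ Nset L U φ Q ↔ (∃ l ∈ Q, x = Sum.inl (l, φ l)) ∨ x = Sum.inr ↑φ := by
  constructor
  · rintro (⟨_, ⟨l, hl, rfl⟩, rfl⟩ | rfl)
    exacts [Or.inl ⟨l, hl, rfl⟩, Or.inr rfl]
  · rintro (⟨l, hl, rfl⟩ | rfl)
    exacts [Or.inl ⟨_, ⟨l, hl, rfl⟩, rfl⟩, Or.inr rfl]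

lemma disjoint_inl_image_singleton_Nset (φ : L → ℝ) (p : L × ℝ) :
    Disjoint (Sum.inl '' {p} : Set (RL L U)) (Nset L U φ {p.1}ᶜ) := by
  refine Set.disjoint_left.mpr ?_
  rintro _ ⟨_, rfl, rfl⟩ hp
  rcases mem_Nset.mp hp with ⟨l, hl, h⟩ | h
  · exact hl (congrArg Prod.fst (Sum.inl_injective h)).symm
  · exact Sum.inl_ne_inr h

lemma disjoint_Nset {φ ψ : L → ℝ} {Q : Set L} (hQ : ∀ l ∈ Q, φ l ≠ ψ l)
    (hφψ : (φ : Germ (U : Filter L) ℝ) ≠ ψ) : Disjoint (Nset L U φ Q) (Nset L U ψ Q) := by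
  refine Set.disjoint_left.mpr fun x hφ hψ => ?_
  rcases mem_Nset.mp hφ with ⟨l, hl, rfl⟩ | rfl <;> rcases mem_Nset.mp hψ with ⟨l', -, h⟩ | h
  · obtain ⟨rfl, h⟩ := Prod.ext_iff.mp (Sum.inl_injective h)
    exact hQ l hl h
  · exact Sum.inl_ne_inr h
  · exact Sum.inr_ne_inl h
  · exact hφψ (Sum.inr_injective h)

lemma compl_singleton_mem_of_ne_pure {x : L} (hx : (U : Filter L) ≠ pure x) : {x}ᶜ ∈ U :=
  Ultrafilter.compl_mem_iff_notMem.mpr fun h => hx ((NeBot.eq_pure_iff U.neBot).mpr h)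

lemma disjoint_nhds_inl {p : L × ℝ} (hU : (U : Filter L) ≠ pure p.1) {y : RL L U}
    (hy : y ≠ Sum.inl p) : Disjoint (𝓝 (Sum.inl p) : Filter (RL L U)) (𝓝 y) := by
  have hp : Sum.inl '' {p} ∈ (𝓝 (Sum.inl p) : Filter (RL L U)) :=
    (isOpen_inl_image {p}).mem_nhds ⟨p, rfl, rfl⟩
  rcases y with q | g
  · refine disjoint_of_disjoint_of_mem ?_ hp ((isOpen_inl_image {q}).mem_nhds ⟨q, rfl, rfl⟩)
    refine Set.disjoint_left.mpr ?_
    rintro _ ⟨_, rfl, rfl⟩ ⟨_, rfl, h⟩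
    exact hy h
  · induction g using Germ.inductionOn with
    | h φ =>
      exact disjoint_of_disjoint_of_mem (disjoint_inl_image_singleton_Nset φ p) hp
        ((isOpen_Nset φ (compl_singleton_mem_of_ne_pure hU)).mem_nhds (Or.inr rfl))

lemma disjoint_nhds_inr {g h : Germ (U : Filter L) ℝ} (hgh : g ≠ h) :
    Disjoint (𝓝 (Sum.inr g) : Filter (RL L U)) (𝓝 (Sum.inr h)) := by
  induction g using Germ.inductionOn with
  | h φ =>
  induction h using Germ.inductionOn with
  | h ψ =>
    have hQ : {l | φ l ≠ ψ l} ∈ U := Ultrafilter.eventually_not.mpr (mt Germ.coe_eq.mpr hgh)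
    exact disjoint_of_disjoint_of_mem (disjoint_Nset (fun _ => id) hgh)
      ((isOpen_Nset φ hQ).mem_nhds (Or.inr rfl)) ((isOpen_Nset ψ hQ).mem_nhds (Or.inr rfl))

end

/-- the topology on `R_L = (L × ℝ) ⊎ K` generated by the basis
`{N_{φ,Q}} ∪ P(L × ℝ)` is Hausdorff. -/
theorem stmt3 (hfree : ∀ x : L, (U : Filter L) ≠ pure x) :
    @T2Space (RL L U) (slimTop L U) := by
  refine t2Space_iff_disjoint_nhds.mpr ?_
  rintro (p | g) y hne
  · exact disjoint_nhds_inl (hfree p.1) hne.symm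
  rcases y with q | h
  · exact (disjoint_nhds_inl (hfree q.1) hne).symm
  · exact disjoint_nhds_inr fun hgh => hne (congrArg Sum.inr hgh)
end

section
/- For E ⊆ ℝ, the closure of L × E in the canonical (L,U)-completion equals (L × E) ⊎ E*, where E* = {[ψ]_U : ψ(λ) ∈ E for all λ ∈ L}. -/
open Filter Set

variable (L : Type) (U : Ultrafilter L)

/-! Every point of `L × ℝ` is isolated, so the closure of `L × E` only adds germs. The sets
`N_{φ,Q}` with `Q ∈ U` form a neighbourhood basis at `[φ]_U`, hence `[φ]_U` is adherent to
`L × E` iff every `Q ∈ U` contains some `λ` with `φ λ ∈ E`, i.e., `U` being an ultrafilter,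
iff `{λ | φ λ ∈ E} ∈ U`; redefining `φ` off this set gives a representative with values in `E`. -/

theorem Filter.Germ.exists_forall_mem_and_coe_eq_iff {α β : Type*} {l : Filter α} [l.NeBot]
    {s : Set β} {f : α → β} :
    (∃ g : α → β, (∀ x, g x ∈ s) ∧ (f : Germ l β) = g) ↔ ∀ᶠ x in l, f x ∈ s := by
  classical
  constructor
  · rintro ⟨g, hg, hfg⟩
    exact (Germ.coe_eq.mp hfg).mono fun x hx => hx ▸ hg x
  · intro hf
    obtain ⟨x₀, hx₀⟩ := hf.exists
    refine ⟨fun x => if f x ∈ s then f x else f x₀, fun x => ?_, ?_⟩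
    · dsimp only
      split_ifs with hx
      exacts [hx, hx₀]
    · exact Germ.coe_eq.mpr (hf.mono fun x hx => (if_pos hx).symm)

namespace RL

variable {L U}

attribute [local instance] slimTop

/- `RL` is not reducible: without the ascriptions below, `Sum.inl p ∈ closure S` would
elaborate in the sum type, which carries no topology. -/

theorem isOpen_nset (φ : L → ℝ) {Q : Set L} (hQ : Q ∈ U) : IsOpen (Nset L U φ Q) :=
  TopologicalSpace.GenerateOpen.basic _ (Or.inl ⟨φ, Q, hQ, rfl⟩)

theorem isOpen_image_inl (A : Set (L × ℝ)) : IsOpen (Sum.inl '' A : Set (RL L U)) :=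
  TopologicalSpace.GenerateOpen.basic _ (Or.inr ⟨A, rfl⟩)

theorem nset_subset_nset {φ₁ φ₂ : L → ℝ} {Q₁ Q₂ : Set L} (hQ : Q₁ ⊆ Q₂)
    (hφ : ∀ l ∈ Q₁, φ₁ l = φ₂ l) (hg : (φ₁ : Germ (U : Filter L) ℝ) = φ₂) :
    Nset L U φ₁ Q₁ ⊆ Nset L U φ₂ Q₂ := by
  rintro x (⟨_, ⟨l, hl, rfl⟩, rfl⟩ | rfl)
  · exact Or.inl ⟨(l, φ₂ l), ⟨l, hQ hl, rfl⟩, by simp [hφ l hl]; rfl⟩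
  · exact Or.inr (by rw [hg]; rfl)

theorem exists_nset_subset_of_isOpen {O : Set (RL L U)} (hO : IsOpen O)
    {g : Germ (U : Filter L) ℝ} (hg : Sum.inr g ∈ O) :
    ∃ φ : L → ℝ, ∃ Q ∈ U, (φ : Germ (U : Filter L) ℝ) = g ∧ Nset L U φ Q ⊆ O := by
  induction hO with
  | basic s hs =>
    rcases hs with ⟨φ, Q, hQ, rfl⟩ | ⟨A, rfl⟩
    · refine ⟨φ, Q, hQ, ?_, subset_rfl⟩
      rcases hg with ⟨_, _, hp⟩ | hp
      · exact Sum.inl_ne_inr hp |>.elim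
      · exact (Sum.inr.inj hp).symm
    · obtain ⟨_, _, hp⟩ := hg
      exact Sum.inl_ne_inr hp |>.elim
  | univ =>
    obtain ⟨φ, rfl⟩ := g.exists_rep
    exact ⟨φ, univ, univ_mem, rfl, subset_univ _⟩
  | inter s t _ _ ihs iht =>
    obtain ⟨φ₁, Q₁, hQ₁, rfl, hs⟩ := ihs hg.1
    obtain ⟨φ₂, Q₂, hQ₂, h₁₂, ht⟩ := iht hg.2
    have hT : {l | φ₁ l = φ₂ l} ∈ U := Germ.coe_eq.mp h₁₂.symm
    refine ⟨φ₁, Q₁ ∩ Q₂ ∩ {l | φ₁ l = φ₂ l}, inter_mem (inter_mem hQ₁ hQ₂) hT, rfl,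
      subset_inter ?_ ?_⟩
    · exact (nset_subset_nset (fun l hl => hl.1.1) (fun _ _ => rfl) rfl).trans hs
    · exact (nset_subset_nset (fun l hl => hl.1.2) (fun l hl => hl.2) h₁₂.symm).trans ht
  | sUnion S _ ih =>
    obtain ⟨s, hs, hgs⟩ := hg
    obtain ⟨φ, Q, hQ, h, hsub⟩ := ih s hs hgs
    exact ⟨φ, Q, hQ, h, hsub.trans (subset_sUnion_of_mem hs)⟩

theorem inl_mem_closure_iff {S : Set (RL L U)} {p : L × ℝ} :
    (Sum.inl p : RL L U) ∈ (closure S : Set (RL L U)) ↔ (Sum.inl p : RL L U) ∈ S := by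
  refine ⟨fun hp => ?_, fun hp => subset_closure (X := RL L U) hp⟩
  obtain ⟨_, ⟨q, rfl, rfl⟩, hq⟩ :=
    (mem_closure_iff (X := RL L U)).mp hp _ (isOpen_image_inl {p}) ⟨p, rfl, rfl⟩
  exact hq

theorem inr_coe_mem_closure_image_inl_iff {A : Set (L × ℝ)} {φ : L → ℝ} :
    (Sum.inr (φ : Germ (U : Filter L) ℝ) : RL L U) ∈ (closure (Sum.inl '' A) : Set (RL L U)) ↔
      ∀ᶠ l in U, (l, φ l) ∈ A := by
  rw [← Ultrafilter.frequently_iff_eventually, frequently_iff]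
  refine (mem_closure_iff (X := RL L U)).trans ⟨fun h Q hQ => ?_, fun h O hO hφO => ?_⟩
  · obtain ⟨_, ⟨_, ⟨l, hl, rfl⟩, rfl⟩ | hy, ⟨q, hq, hqy⟩⟩ := h _ (isOpen_nset φ hQ) (Or.inr rfl)
    · obtain rfl := Sum.inl_injective hqy
      exact ⟨l, hl, hq⟩
    · exact Sum.inl_ne_inr (hqy.trans hy) |>.elim
  · obtain ⟨ψ, Q, hQ, hψφ, hsub⟩ := exists_nset_subset_of_isOpen hO hφO
    obtain ⟨l, ⟨hlQ, hlψ⟩, hlA⟩ := h (inter_mem hQ (Germ.coe_eq.mp hψφ))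
    refine ⟨Sum.inl (l, ψ l), hsub (Or.inl ⟨_, ⟨l, hlQ, rfl⟩, rfl⟩), ⟨_, ?_, rfl⟩⟩
    rwa [show ψ l = φ l from hlψ]

end RL

theorem stmt15 (E : Set ℝ) :
    @closure (RL L U) (slimTop L U) (Sum.inl '' (Set.univ ×ˢ E)) =
      (Sum.inl '' (Set.univ ×ˢ E)) ∪
        Sum.inr '' {g : Filter.Germ (U : Filter L) ℝ |
          ∃ ψ : L → ℝ, (∀ l, ψ l ∈ E) ∧ g = (ψ : Filter.Germ (U : Filter L) ℝ)} := by
  ext (p | g)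
  · refine RL.inl_mem_closure_iff.trans (or_iff_left ?_).symm
    rintro ⟨_, _, h⟩
    exact Sum.inr_ne_inl h
  · induction g using Germ.inductionOn with | h φ => ?_
    refine RL.inr_coe_mem_closure_image_inl_iff.trans (.trans ?_ (or_iff_right ?_).symm)
    · refine .trans ?_ Sum.inr_injective.mem_set_image.symm
      rw [mem_ofPred_eq, Germ.exists_forall_mem_and_coe_eq_iff]
      simp
    · rintro ⟨_, _, h⟩
      exact Sum.inl_ne_inr h
end
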